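/- For all ordinals α < I and all ordinals β, γ: ψ_{Ω_{α+1}} β < ψ_I γ if and only if α < ψ_I γ. -/

import Mathlib

open Ordinal Set

noncomputable section

/-- A cardinal is weakly inaccessible: uncountable, regular, and a limit cardinal. -/
def WeaklyInaccessible (c : Cardinal) : Prop :=
  Cardinal.aleph0 < c ∧ c.IsRegular ∧ ∀ x < c, Order.succ x < c

/-- `I` is (the initial ordinal of) the least weakly inaccessible cardinal. -/
def I : Ordinal := (sInf {c : Cardinal | WeaklyInaccessible c}).ord

/-- `Om α` is `Ω_α`: `0` for `α = 0` and the initial ordinal of `ℵ_α` otherwise. -/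
def Om (α : Ordinal) : Ordinal := if α = 0 then 0 else (Cardinal.aleph α).ord

/-- `R = {Ω_{μ+1} : μ < I} ∪ {I}`. -/
def R : Set Ordinal := {o | (∃ μ < I, o = Om (μ + 1)) ∨ o = I}

/-- Given the family of hulls at earlier stages, the collapse `ψ_σ`. -/
def psiOf (F : Set Ordinal → Set Ordinal) (σ : Ordinal) : Ordinal :=
  sInf ({β | β < σ ∧ σ ∈ F (Set.Iio β) ∧ F (Set.Iio β) ∩ Set.Iio σ ⊆ Set.Iio β} ∪ {σ})

instance : WellFoundedRelation Ordinal := ⟨(· < ·), Ordinal.lt_wf⟩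

/-- `H α X` is the least set of ordinals containing `X ∪ {0, I}` and closed under
ordinal addition, `β ↦ ω^β`, `β ↦ Ω_β`, and `(σ, β) ↦ ψ_σ β` for `σ ∈ R` and `β < α`. -/
def H (α : Ordinal) (X : Set Ordinal) : Set Ordinal :=
  ⋂₀ {Y : Set Ordinal | X ∪ {0, I} ⊆ Y ∧
      (∀ γ ∈ Y, ∀ δ ∈ Y, γ + δ ∈ Y) ∧
      (∀ γ ∈ Y, Ordinal.omega0 ^ γ ∈ Y) ∧
      (∀ γ ∈ Y, Om γ ∈ Y) ∧
      (∀ σ ∈ R, ∀ β ∈ Y, β < α → σ ∈ Y → psiOf (H β) σ ∈ Y)}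
termination_by α
decreasing_by assumption

/-- The collapsing function `ψ_σ α`. -/
def psi (σ α : Ordinal) : Ordinal := psiOf (H α) σ

/-- The relation `δ₀ ≪ δ₁ {η}`. -/
def llr (η δ₀ δ₁ : Ordinal) : Prop :=
  δ₀ < δ₁ ∧ ∀ σ ∈ R, ∀ α : Ordinal,
    δ₁ ∈ H α (Set.Iio (psi σ α)) → η ∈ H α (Set.Iio (psi σ α)) → δ₀ ∈ H α (Set.Iio (psi σ α))

/-!
If `ψ := ψ_{Ω_{α+1}} β < Ω_{α+1}` were `≤ α`, then `α + 1 ∉ H_β(ψ)`, since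
`H_β(ψ) ∩ Ω_{α+1} ⊆ ψ`. But then `H_β(ψ)` without `Ω_{α+1}` is still closed under the generating
operations: `Ω_{α+1}` is closed under `+` and `ω^·`, differs from `I`, is `Ω_γ` only for
`γ = α + 1`, and lies in every `H_δ(Ω_{α+1})`, so it is no proper collapse `ψ_σ δ`. This
contradicts `Ω_{α+1} ∈ H_β(ψ)`; hence `α < ψ_{Ω_{α+1}} β`. Conversely, `α < ψ_I γ` puts
`Ω_{α+1} < I` into `H_γ(ψ_I γ)`, so `ψ_{Ω_{α+1}} β ≤ Ω_{α+1} < ψ_I γ`.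
-/

structure IsHClosed (α : Ordinal) (X Y : Set Ordinal) : Prop where
  subset : X ∪ {0, I} ⊆ Y
  add_mem : ∀ γ ∈ Y, ∀ δ ∈ Y, γ + δ ∈ Y
  opow_mem : ∀ γ ∈ Y, ω ^ γ ∈ Y
  Om_mem : ∀ γ ∈ Y, Om γ ∈ Y
  psi_mem : ∀ σ ∈ R, ∀ β ∈ Y, β < α → σ ∈ Y → psi σ β ∈ Y

section Hull

variable {α : Ordinal} {X : Set Ordinal}

theorem H_eq_sInter (α : Ordinal) (X : Set Ordinal) : H α X = ⋂₀ {Y | IsHClosed α X Y} := by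
  rw [H]
  congr 1
  ext Y
  exact ⟨fun ⟨h₁, h₂, h₃, h₄, h₅⟩ => ⟨h₁, h₂, h₃, h₄, h₅⟩,
    fun ⟨h₁, h₂, h₃, h₄, h₅⟩ => ⟨h₁, h₂, h₃, h₄, h₅⟩⟩

theorem H_subset_of_isHClosed {Y : Set Ordinal} (hY : IsHClosed α X Y) : H α X ⊆ Y := by
  rw [H_eq_sInter]
  exact sInter_subset_of_mem hY

theorem isHClosed_H (α : Ordinal) (X : Set Ordinal) : IsHClosed α X (H α X) := by
  rw [H_eq_sInter]
  exact ⟨fun _ hx Y hY => hY.subset hx,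
    fun _ hγ _ hδ Y hY => hY.add_mem _ (hγ Y hY) _ (hδ Y hY),
    fun _ hγ Y hY => hY.opow_mem _ (hγ Y hY),
    fun _ hγ Y hY => hY.Om_mem _ (hγ Y hY),
    fun σ hσ _ hβ hβα hσY Y hY => hY.psi_mem σ hσ _ (hβ Y hY) hβα (hσY Y hY)⟩

theorem subset_H : X ⊆ H α X :=
  fun _ hx => (isHClosed_H α X).subset (mem_union_left _ hx)

theorem add_mem_H {γ δ : Ordinal} (hγ : γ ∈ H α X) (hδ : δ ∈ H α X) : γ + δ ∈ H α X :=
  (isHClosed_H α X).add_mem γ hγ δ hδ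

theorem Om_mem_H {γ : Ordinal} (hγ : γ ∈ H α X) : Om γ ∈ H α X :=
  (isHClosed_H α X).Om_mem γ hγ

theorem one_mem_H : (1 : Ordinal) ∈ H α X := by
  simpa using (isHClosed_H α X).opow_mem 0 ((isHClosed_H α X).subset (by simp))

end Hull

section Collapse

theorem psiOf_le (F : Set Ordinal → Set Ordinal) (σ : Ordinal) : psiOf F σ ≤ σ :=
  csInf_le' (mem_union_right _ rfl)

variable {F : Set Ordinal → Set Ordinal} {σ : Ordinal}

theorem psiOf_spec (h : psiOf F σ < σ) :
    σ ∈ F (Iio (psiOf F σ)) ∧ F (Iio (psiOf F σ)) ∩ Iio σ ⊆ Iio (psiOf F σ) := by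
  rcases csInf_mem (s := {β | β < σ ∧ σ ∈ F (Iio β) ∧ F (Iio β) ∩ Iio σ ⊆ Iio β} ∪ {σ})
    ⟨σ, mem_union_right _ rfl⟩ with hmem | heq
  · exact hmem.2
  · exact absurd heq h.ne

theorem psiOf_not_mem (h : psiOf F σ < σ) : psiOf F σ ∉ F (Iio (psiOf F σ)) :=
  fun hmem => (mem_Iio.1 ((psiOf_spec h).2 ⟨hmem, h⟩)).false

end Collapse

section Cardinals

open Cardinal

universe u

theorem Om_of_ne_zero {α : Ordinal} (hα : α ≠ 0) : Om α = ω_ α := by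
  rw [Om, if_neg hα, ord_aleph]

theorem Om_succ (α : Ordinal) : Om (α + 1) = ω_ (α + 1) :=
  Om_of_ne_zero (ne_zero_of_lt (lt_add_one α))

theorem Om_succ_pos (α : Ordinal) : 0 < Om (α + 1) :=
  Om_succ α ▸ omega_pos _

theorem Om_strictMono : StrictMono Om := by
  intro α β hαβ
  rw [Om_of_ne_zero (ne_zero_of_lt hαβ)]
  rcases eq_or_ne α 0 with rfl | hα
  · simpa [Om] using omega_pos β
  · rwa [Om_of_ne_zero hα, omega_lt_omega]

theorem add_one_lt_Om_succ (α : Ordinal) : α + 1 < Om (α + 1) := by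
  rw [Om_succ]
  exact (isSuccLimit_omega _).add_one_lt ((lt_add_one α).trans_le (le_omega_self _))

theorem not_weaklyInaccessible_aleph_succ (α : Ordinal) : ¬ WeaklyInaccessible (ℵ_ (α + 1)) := by
  intro h
  have := h.2.2 (ℵ_ α) (aleph_lt_aleph.2 (lt_add_one α))
  rw [← succ_aleph] at this
  exact this.false

theorem weaklyInaccessible_card_I (hI : I.{u} ≠ 0) : WeaklyInaccessible I.{u}.card := by
  have hne : {c : Cardinal.{u} | WeaklyInaccessible c}.Nonempty := by
    by_contra h
    rw [not_nonempty_iff_eq_empty] at h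
    exact hI (by rw [I, h, Cardinal.sInf_empty, ord_zero])
  rw [I, card_ord]
  exact csInf_mem hne

theorem Om_succ_ne_I (α : Ordinal) : Om (α + 1) ≠ I := by
  intro h
  have hI : I ≠ 0 := h ▸ (Om_succ_pos α).ne'
  apply not_weaklyInaccessible_aleph_succ α
  rw [← card_omega, ← Om_succ, h]
  exact weaklyInaccessible_card_I hI

theorem WeaklyInaccessible.aleph_lt {c : Cardinal} (hc : WeaklyInaccessible c) {o : Ordinal}
    (ho : o < c.ord) : ℵ_ o < c := by
  induction o using WellFoundedLT.induction with | ind o IH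
  rcases zero_or_succ_or_isSuccLimit o with rfl | ⟨a, rfl⟩ | hlim
  · rw [aleph_zero]; exact hc.1
  · rw [Order.succ_eq_add_one, ← succ_aleph]
    exact hc.2.2 _ (IH a (Order.lt_succ a) ((Order.lt_succ a).trans ho))
  · rw [aleph_limit hlim]
    apply lift_iSup_lt_of_lt_cof_ord
    · rwa [Cardinal.mk_Iio_ordinal, Cardinal.lift_lift, hc.2.1.lift.cof_ord, Cardinal.lift_lt,
        ← lt_ord]
    · exact fun a => IH a a.2 (a.2.trans ho)

theorem Om_succ_lt_I {α : Ordinal} (hα : α < I) : Om (α + 1) < I := by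
  have hc := weaklyInaccessible_card_I hα.ne_bot
  have hI : I = I.card.ord := by rw [I, card_ord]
  rw [hI] at hα ⊢
  rw [Om_succ, ← ord_aleph, ord_lt_ord]
  exact hc.aleph_lt ((isSuccLimit_ord hc.1.le).add_one_lt hα)

end Cardinals

theorem Ordinal.IsPrincipal.eq_or_eq_of_add_eq {o a b : Ordinal} (ho : IsPrincipal (· + ·) o)
    (h : a + b = o) : a = o ∨ b = o := by
  by_contra! hne
  rcases hne.1.lt_or_gt with ha | ha
  · rcases hne.2.lt_or_gt with hb | hb
    · exact (ho ha hb).ne h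
    · exact (hb.trans_le le_add_self).ne' h
  · exact (ha.trans_le le_self_add).ne' h

theorem Ordinal.IsPrincipal.eq_of_omega0_opow_eq {o a : Ordinal} (ho : IsPrincipal (· ^ ·) o)
    (hω : ω < o) (h : ω ^ a = o) : a = o := by
  by_contra hne
  rcases lt_or_gt_of_ne hne with ha | ha
  · exact (ho hω ha).ne h
  · exact (ha.trans_le (right_le_opow a one_lt_omega0)).ne' h

theorem Om_succ_not_mem_H {α β : Ordinal} {X : Set Ordinal} (hX : X ⊆ Iio (Om (α + 1)))
    (hα : α + 1 ∉ H β X) : Om (α + 1) ∉ H β X := by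
  have hcl := isHClosed_H β X
  have hadd : IsPrincipal (· + ·) (Om (α + 1)) := by rw [Om_succ]; exact isPrincipal_add_omega _
  have hopow : IsPrincipal (· ^ ·) (Om (α + 1)) := by rw [Om_succ]; exact isPrincipal_opow_omega _
  have hω : ω < Om (α + 1) := by
    rw [Om_succ, ← omega_zero, omega_lt_omega]
    exact pos_of_gt (lt_add_one α)
  suffices IsHClosed β X (H β X \ {Om (α + 1)}) from fun h => (H_subset_of_isHClosed this h).2 rfl
  refine ⟨fun x hx => ⟨hcl.subset hx, mem_singleton_iff.not.2 ?_⟩, ?_, ?_, ?_, ?_⟩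
  · rcases hx with hx | rfl | rfl
    · exact (hX hx).ne
    · exact (Om_succ_pos α).ne
    · exact (Om_succ_ne_I α).symm
  · rintro x ⟨hx, hxΩ⟩ y ⟨hy, hyΩ⟩
    exact ⟨hcl.add_mem x hx y hy, fun h => (hadd.eq_or_eq_of_add_eq h).elim hxΩ hyΩ⟩
  · rintro x ⟨hx, hxΩ⟩
    exact ⟨hcl.opow_mem x hx, fun h => hxΩ (hopow.eq_of_omega0_opow_eq hω h)⟩
  · rintro x ⟨hx, -⟩
    refine ⟨hcl.Om_mem x hx, fun h => hα ?_⟩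
    rwa [← Om_strictMono.injective h]
  · rintro σ hσR x ⟨hx, -⟩ hxβ ⟨hσ, hσΩ⟩
    refine ⟨hcl.psi_mem σ hσR x hx hxβ hσ, fun h => ?_⟩
    rcases (psiOf_le (H x) σ).lt_or_eq with hlt | heq
    · apply psiOf_not_mem hlt
      change psi σ x ∈ H x (Iio (psi σ x))
      rw [h]
      exact Om_mem_H (subset_H (add_one_lt_Om_succ α))
    · exact hσΩ (heq.symm.trans h)

theorem lt_psi_Om_succ (α β : Ordinal) : α < psi (Om (α + 1)) β := by
  rcases (psiOf_le (H β) (Om (α + 1))).lt_or_eq with hlt | heq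
  · obtain ⟨hΩ, hgap⟩ := psiOf_spec hlt
    by_contra! hle
    refine Om_succ_not_mem_H (fun x hx => ?_) (fun hsucc => ?_) hΩ
    · exact (mem_Iio.1 hx).trans hlt
    · exact (hgap ⟨hsucc, add_one_lt_Om_succ α⟩).not_ge (hle.trans (lt_add_one α).le)
  · rw [psi, heq]
    exact (lt_add_one α).trans (add_one_lt_Om_succ α)

theorem Om_succ_lt_psi_I {α γ : Ordinal} (hαI : α < I) (hα : α < psi I γ) :
    Om (α + 1) < psi I γ := by
  rcases (psiOf_le (H γ) I).lt_or_eq with hlt | heq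
  · exact (psiOf_spec hlt).2 ⟨Om_mem_H (add_mem_H (subset_H hα) one_mem_H), Om_succ_lt_I hαI⟩
  · rw [psi, heq]
    exact Om_succ_lt_I hαI

theorem stmt8_general :
    ∀ α < I, ∀ β γ : Ordinal, (psi (Om (α + 1)) β < psi I γ ↔ α < psi I γ) := by
  intro α hα β γ
  exact ⟨(lt_psi_Om_succ α β).trans,
    fun h => (psiOf_le (H β) _).trans_lt (Om_succ_lt_psi_I hα h)⟩

theorem stmt8 (hex : ∃ c : Cardinal, WeaklyInaccessible c) :
    ∀ α < I, ∀ β γ : Ordinal, (psi (Om (α + 1)) β < psi I γ ↔ α < psi I γ) :=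
  stmt8_general

end
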